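/- Structural composition of NAA is monotone with respect to modal refinement: for all NAA S₁, S₂, S₃, S₄ over Σ, if S₁ ≤ₘ S₃ and S₂ ≤ₘ S₄ then S₁ ‖ S₂ ≤ₘ S₃ ‖ S₄. -/

import Mathlib

/-- A nondeterministic acceptance automaton over alphabet `A`. -/
structure NAA (A : Type) : Type 1 where
  State : Type
  init : Set State
  Tran : State → Set (Set (A × State))

namespace NAA

variable {A : Type}

/-- Modal refinement relation between two NAA. -/
def Refinement (S1 S2 : NAA A) (R : Set (S1.State × S2.State)) : Prop :=
  ∀ p ∈ R, ∀ M1 ∈ S1.Tran p.1, ∃ M2 ∈ S2.Tran p.2,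
    (∀ q ∈ M1, ∃ r ∈ M2, q.1 = r.1 ∧ (q.2, r.2) ∈ R) ∧
    (∀ r ∈ M2, ∃ q ∈ M1, q.1 = r.1 ∧ (q.2, r.2) ∈ R)

/-- `S1 ≤ₘ S2`: there is an initialised modal refinement from `S1` to `S2`. -/
def Refines (S1 S2 : NAA A) : Prop :=
  ∃ R, Refinement S1 S2 R ∧ ∀ s ∈ S1.init, ∃ t ∈ S2.init, (s, t) ∈ R

/-- `S1 ≡ₘ S2`: modal refinement in both directions. -/
def Equiv (S1 S2 : NAA A) : Prop := Refines S1 S2 ∧ Refines S2 S1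

/-- The defining finiteness conditions of NAA: the set of initial states is
finite and every admissible transition set is a finite subset of `A × State`. -/
def Wellformed (S : NAA A) : Prop :=
  S.init.Finite ∧ ∀ s, ∀ M ∈ S.Tran s, M.Finite

end NAA

/-- Structural (CSP-style) composition of two NAA:
`Tran (s1, s2) = { M1 ‖ M2 | M1 ∈ Tran1 s1, M2 ∈ Tran2 s2 }`, where
`M1 ‖ M2 = {(a, (t1, t2)) | (a, t1) ∈ M1, (a, t2) ∈ M2}`. -/
def NAA.comp {A : Type} (S1 S2 : NAA A) : NAA A where
  State := S1.State × S2.State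
  init := S1.init ×ˢ S2.init
  Tran := fun s => {M | ∃ M1 ∈ S1.Tran s.1, ∃ M2 ∈ S2.Tran s.2,
    M = {q : A × (S1.State × S2.State) | (q.1, q.2.1) ∈ M1 ∧ (q.1, q.2.2) ∈ M2}}

/-!
Refinements `R₁₃ : S₁ ≤ₘ S₃` and `R₂₄ : S₂ ≤ₘ S₄` combine into the componentwise relation on
pairs of states. A synchronised step `(a, (t₁, t₂))` of `M₁ ‖ M₂` is answered in `M₃ ‖ M₄` by
pairing the answers to `(a, t₁)` and `(a, t₂)`: both carry the label `a`, so they synchronise.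
-/

namespace NAA

variable {A X₁ X₂ Y₁ Y₂ : Type}

def syncProd (M₁ : Set (A × X₁)) (M₂ : Set (A × X₂)) : Set (A × (X₁ × X₂)) :=
  {q | (q.1, q.2.1) ∈ M₁ ∧ (q.1, q.2.2) ∈ M₂}

theorem mem_comp_tran {S₁ S₂ : NAA A} {s : S₁.State × S₂.State}
    {M : Set (A × (S₁.State × S₂.State))} :
    M ∈ (S₁.comp S₂).Tran s ↔ ∃ M₁ ∈ S₁.Tran s.1, ∃ M₂ ∈ S₂.Tran s.2, M = syncProd M₁ M₂ :=
  Iff.rfl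

def prodRel (R₁ : Set (X₁ × Y₁)) (R₂ : Set (X₂ × Y₂)) : Set ((X₁ × X₂) × (Y₁ × Y₂)) :=
  {p | (p.1.1, p.2.1) ∈ R₁ ∧ (p.1.2, p.2.2) ∈ R₂}

section Matching

variable {R₁ : Set (X₁ × Y₁)} {R₂ : Set (X₂ × Y₂)}
  {M₁ : Set (A × X₁)} {M₂ : Set (A × X₂)} {N₁ : Set (A × Y₁)} {N₂ : Set (A × Y₂)}

theorem forall_exists_syncProd (h₁ : ∀ q ∈ M₁, ∃ r ∈ N₁, q.1 = r.1 ∧ (q.2, r.2) ∈ R₁)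
    (h₂ : ∀ q ∈ M₂, ∃ r ∈ N₂, q.1 = r.1 ∧ (q.2, r.2) ∈ R₂) :
    ∀ q ∈ syncProd M₁ M₂, ∃ r ∈ syncProd N₁ N₂, q.1 = r.1 ∧ (q.2, r.2) ∈ prodRel R₁ R₂ := by
  rintro ⟨a, t₁, t₂⟩ ⟨ht₁, ht₂⟩
  obtain ⟨⟨b, u₁⟩, hu₁, rfl : a = b, hR₁⟩ := h₁ _ ht₁
  obtain ⟨⟨b, u₂⟩, hu₂, rfl : a = b, hR₂⟩ := h₂ _ ht₂
  exact ⟨(a, u₁, u₂), ⟨hu₁, hu₂⟩, rfl, hR₁, hR₂⟩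

theorem forall_exists_syncProd_rev (h₁ : ∀ r ∈ N₁, ∃ q ∈ M₁, q.1 = r.1 ∧ (q.2, r.2) ∈ R₁)
    (h₂ : ∀ r ∈ N₂, ∃ q ∈ M₂, q.1 = r.1 ∧ (q.2, r.2) ∈ R₂) :
    ∀ r ∈ syncProd N₁ N₂, ∃ q ∈ syncProd M₁ M₂, q.1 = r.1 ∧ (q.2, r.2) ∈ prodRel R₁ R₂ := by
  rintro ⟨a, u₁, u₂⟩ ⟨hu₁, hu₂⟩
  obtain ⟨⟨b, t₁⟩, ht₁, rfl : b = a, hR₁⟩ := h₁ _ hu₁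
  obtain ⟨⟨c, t₂⟩, ht₂, rfl : c = b, hR₂⟩ := h₂ _ hu₂
  exact ⟨(c, t₁, t₂), ⟨ht₁, ht₂⟩, rfl, hR₁, hR₂⟩

end Matching

theorem Refinement.comp {S₁ S₂ S₃ S₄ : NAA A} {R₁₃ : Set (S₁.State × S₃.State)}
    {R₂₄ : Set (S₂.State × S₄.State)} (h₁₃ : Refinement S₁ S₃ R₁₃)
    (h₂₄ : Refinement S₂ S₄ R₂₄) :
    Refinement (S₁.comp S₂) (S₃.comp S₄) (prodRel R₁₃ R₂₄) := by
  rintro ⟨s₁₂, s₃₄⟩ ⟨hp₁₃, hp₂₄⟩ M hM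
  obtain ⟨M₁, hM₁, M₂, hM₂, rfl⟩ := mem_comp_tran.1 hM
  obtain ⟨M₃, hM₃, hfwd₁₃, hbwd₁₃⟩ := h₁₃ _ hp₁₃ M₁ hM₁
  obtain ⟨M₄, hM₄, hfwd₂₄, hbwd₂₄⟩ := h₂₄ _ hp₂₄ M₂ hM₂
  exact ⟨syncProd M₃ M₄, mem_comp_tran.2 ⟨M₃, hM₃, M₄, hM₄, rfl⟩,
    forall_exists_syncProd hfwd₁₃ hfwd₂₄, forall_exists_syncProd_rev hbwd₁₃ hbwd₂₄⟩

theorem Refines.comp {S₁ S₂ S₃ S₄ : NAA A} (h₁₃ : S₁.Refines S₃) (h₂₄ : S₂.Refines S₄) :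
    (S₁.comp S₂).Refines (S₃.comp S₄) := by
  obtain ⟨R₁₃, hR₁₃, hinit₁₃⟩ := h₁₃
  obtain ⟨R₂₄, hR₂₄, hinit₂₄⟩ := h₂₄
  refine ⟨prodRel R₁₃ R₂₄, hR₁₃.comp hR₂₄, ?_⟩
  rintro ⟨s₁, s₂⟩ ⟨hs₁, hs₂⟩
  obtain ⟨t₃, ht₃, hR₃⟩ := hinit₁₃ s₁ hs₁
  obtain ⟨t₄, ht₄, hR₄⟩ := hinit₂₄ s₂ hs₂
  exact ⟨(t₃, t₄), ⟨ht₃, ht₄⟩, hR₃, hR₄⟩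

end NAA

theorem statement15_general (A : Type) (S1 S2 S3 S4 : NAA A)
    (h13 : S1.Refines S3) (h24 : S2.Refines S4) :
    (S1.comp S2).Refines (S3.comp S4) :=
  h13.comp h24

/-- structural composition of NAA is monotone with respect to
modal refinement. -/
theorem statement15 (A : Type) [Fintype A] (S1 S2 S3 S4 : NAA A)
    (h1 : S1.Wellformed) (h2 : S2.Wellformed) (h3 : S3.Wellformed)
    (h4 : S4.Wellformed)
    (h13 : S1.Refines S3) (h24 : S2.Refines S4) :
    (S1.comp S2).Refines (S3.comp S4) :=
  statement15_general A S1 S2 S3 S4 h13 h24
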